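/- arXiv:1107.5347 — 5 statements merged into one kernel-verified Lean document; each statement's English description precedes it below -/
import Mathlib

section
/- Let ρ^{OQ} be a pure state on the tensor product of finite-dimensional Hilbert spaces H_O ⊗ H_Q, with reduced state ρ^O = tr_Q(ρ^{OQ}). A finite family {σ_a} of positive semidefinite operators on H_O can be remotely prepared from ρ^{OQ} (i.e., there exists a POVM {P_a} on H_Q with tr_Q((1⊗P_a) ρ^{OQ}) = σ_a for all a) if and only if Σ_a σ_a = ρ^O. -/
open Matrix Kronecker BigOperators
open scoped ComplexOrder

/-- Partial trace over the second (query) system. -/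
noncomputable def ptraceQ {O Q : Type*} [Fintype Q]
    (M : Matrix (O × Q) (O × Q) ℂ) : Matrix O O ℂ :=
  Matrix.of fun i j => ∑ k : Q, M (i, k) (j, k)

/-!
Write `V` for the `O × Q` coefficient matrix of the state vector. Measuring `P` on `Q` leaves
`V Pᵀ Vᴴ` on `O`, and `ρ^O = V Vᴴ`, so the condition is necessary by linearity. Conversely,
`σ_a ≤ R := V Vᴴ` forces the support of `σ_a` into the range of `R`, so `R R⁺ σ_a R⁺ R = σ_a`
for the Moore–Penrose inverse `R⁺`. The operators `Vᴴ R⁺ σ_a R⁺ V` then sum to the projection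
`Vᴴ R⁺ V`, and sharing its complement, which is invisible through `V`, among all outcomes
completes them to a POVM.
-/

namespace Matrix

open scoped MatrixOrder

variable {𝕜 n k : Type*} [RCLike 𝕜] [Fintype n] [Fintype k]

lemma PosSemidef.mulVec_eq_zero_of_le {A B : Matrix n n 𝕜} (hA : A.PosSemidef) (hAB : A ≤ B)
    {x : n → 𝕜} (hx : B *ᵥ x = 0) : A *ᵥ x = 0 := by
  refine (hA.dotProduct_mulVec_zero_iff x).1 (le_antisymm ?_ (hA.dotProduct_mulVec_nonneg x))
  have := hAB.dotProduct_mulVec_nonneg x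
  rwa [sub_mulVec, dotProduct_sub, hx, dotProduct_zero, zero_sub, neg_nonneg] at this

lemma PosSemidef.mul_eq_zero_of_le {A B : Matrix n n 𝕜} (hA : A.PosSemidef) (hAB : A ≤ B)
    {C : Matrix n k 𝕜} (hC : B * C = 0) : A * C = 0 := by
  refine ext_iff_mulVec.2 fun x => ?_
  rw [← mulVec_mulVec, zero_mulVec]
  exact hA.mulVec_eq_zero_of_le hAB (by rw [mulVec_mulVec, hC, zero_mulVec])

variable [DecidableEq n]

/-- The Moore–Penrose inverse of a Hermitian matrix: its eigenvalues are inverted, with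
`0⁻¹ = 0`. -/
noncomputable def hermitianPinv (A : Matrix n n 𝕜) : Matrix n n 𝕜 := cfc (·⁻¹ : ℝ → ℝ) A

lemma continuousOn_spectrum (f : ℝ → ℝ) (A : Matrix n n 𝕜) : ContinuousOn f (spectrum ℝ A) :=
  (Set.toFinite _).continuousOn f

lemma isHermitian_hermitianPinv (A : Matrix n n 𝕜) : (hermitianPinv A).IsHermitian :=
  cfc_predicate _ A

lemma IsHermitian.mul_hermitianPinv_mul_self {A : Matrix n n 𝕜} (hA : A.IsHermitian) :
    A * hermitianPinv A * A = A := by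
  calc A * hermitianPinv A * A = cfc (fun x : ℝ => x * x⁻¹ * x) A := by
        rw [cfc_mul _ _ A (continuousOn_spectrum _ A) (continuousOn_spectrum _ A),
          cfc_mul _ _ A (continuousOn_spectrum _ A) (continuousOn_spectrum _ A),
          cfc_id' ℝ A hA.isSelfAdjoint, hermitianPinv]
    _ = A := by simp only [mul_inv_mul_cancel, cfc_id' ℝ A hA.isSelfAdjoint]

lemma IsHermitian.hermitianPinv_mul_self_mul_hermitianPinv {A : Matrix n n 𝕜}
    (hA : A.IsHermitian) : hermitianPinv A * A * hermitianPinv A = hermitianPinv A := by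
  calc hermitianPinv A * A * hermitianPinv A = cfc (fun x : ℝ => x⁻¹ * x * x⁻¹) A := by
        rw [cfc_mul _ _ A (continuousOn_spectrum _ A) (continuousOn_spectrum _ A),
          cfc_mul _ _ A (continuousOn_spectrum _ A) (continuousOn_spectrum _ A),
          cfc_id' ℝ A hA.isSelfAdjoint, hermitianPinv]
    _ = hermitianPinv A := by
        simp only [hermitianPinv]
        congr 1
        funext x
        simpa using mul_inv_mul_cancel x⁻¹

lemma PosSemidef.mul_hermitianPinv_mul_of_le {A B : Matrix n n 𝕜} (hA : A.PosSemidef)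
    (hAB : A ≤ B) (hB : B.IsHermitian) : B * hermitianPinv B * A = A := by
  have h : A * (1 - hermitianPinv B * B) = 0 := hA.mul_eq_zero_of_le hAB <| by
    rw [mul_sub, mul_one, ← Matrix.mul_assoc, hB.mul_hermitianPinv_mul_self, sub_self]
  have h' := congrArg (·ᴴ) h
  rw [conjTranspose_mul, conjTranspose_sub, conjTranspose_one, conjTranspose_mul, hB.eq,
    (isHermitian_hermitianPinv B).eq, hA.1.eq, conjTranspose_zero, sub_mul, one_mul,
    sub_eq_zero] at h'
  exact h'.symm

lemma PosSemidef.conj_hermitianPinv_of_le {A B : Matrix n n 𝕜} (hA : A.PosSemidef) (hAB : A ≤ B)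
    (hB : B.IsHermitian) : B * hermitianPinv B * A * hermitianPinv B * B = A := by
  have h := congrArg (·ᴴ) (hA.mul_hermitianPinv_mul_of_le hAB hB)
  rw [conjTranspose_mul, conjTranspose_mul, hB.eq, (isHermitian_hermitianPinv B).eq,
    hA.1.eq] at h
  rw [hA.mul_hermitianPinv_mul_of_le hAB hB, Matrix.mul_assoc, h]

lemma isStarProjection_conjTranspose_mul_hermitianPinv_mul (V : Matrix n k 𝕜) :
    IsStarProjection (Vᴴ * hermitianPinv (V * Vᴴ) * V) where
  isIdempotentElem := by
    rw [IsIdempotentElem]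
    calc Vᴴ * hermitianPinv (V * Vᴴ) * V * (Vᴴ * hermitianPinv (V * Vᴴ) * V)
        = Vᴴ * (hermitianPinv (V * Vᴴ) * (V * Vᴴ) * hermitianPinv (V * Vᴴ)) * V := by
          simp only [Matrix.mul_assoc]
      _ = Vᴴ * hermitianPinv (V * Vᴴ) * V := by
          rw [(isHermitian_mul_conjTranspose_self V).hermitianPinv_mul_self_mul_hermitianPinv,
            Matrix.mul_assoc]
  isSelfAdjoint := by
    rw [IsSelfAdjoint, star_eq_conjTranspose, conjTranspose_mul, conjTranspose_mul,
      conjTranspose_conjTranspose, (isHermitian_hermitianPinv _).eq, Matrix.mul_assoc]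

theorem exists_posSemidef_sum_eq_one_and_conj_eq [DecidableEq k] {ι : Type*} [Fintype ι]
    [Nonempty ι] (V : Matrix n k 𝕜) (σ : ι → Matrix n n 𝕜) (hσ : ∀ a, (σ a).PosSemidef)
    (hsum : ∑ a, σ a = V * Vᴴ) :
    ∃ P : ι → Matrix k k 𝕜, (∀ a, (P a).PosSemidef) ∧ ∑ a, P a = 1 ∧ ∀ a, V * P a * Vᴴ = σ a := by
  set R := V * Vᴴ
  have hR : R.IsHermitian := isHermitian_mul_conjTranspose_self V
  set Rp := hermitianPinv R
  have hRp : Rp.IsHermitian := isHermitian_hermitianPinv R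
  set K := Vᴴ * Rp * V
  have hK : IsStarProjection K := isStarProjection_conjTranspose_mul_hermitianPinv_mul V
  have hσR (a : ι) : σ a ≤ R :=
    hsum ▸ Finset.single_le_sum (fun b _ => (hσ b).nonneg) (Finset.mem_univ a)
  set c : 𝕜 := (Fintype.card ι : 𝕜)⁻¹
  refine ⟨fun a => Vᴴ * Rp * σ a * Rp * V + c • (1 - K), fun a => ?_, ?_, fun a => ?_⟩
  · refine PosSemidef.add ?_ (nonneg_iff_posSemidef.1 hK.one_sub_nonneg |>.smul (by positivity))
    simpa only [conjTranspose_mul, hRp.eq, Matrix.mul_assoc]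
      using (hσ a).conjTranspose_mul_mul_same (Rp * V)
  · have hc : (Fintype.card ι : 𝕜) * c = 1 := mul_inv_cancel₀ (by simp)
    calc ∑ a, (Vᴴ * Rp * σ a * Rp * V + c • (1 - K))
        = Vᴴ * Rp * (∑ a, σ a) * Rp * V + (Fintype.card ι : 𝕜) • c • (1 - K) := by
          simp only [Finset.sum_add_distrib, Matrix.mul_sum, Matrix.sum_mul, Finset.sum_const,
            Finset.card_univ, Nat.cast_smul_eq_nsmul]
      _ = Vᴴ * (Rp * R * Rp) * V + (1 - K) := by
          rw [hsum, smul_smul, hc, one_smul]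
          simp only [Matrix.mul_assoc]
      _ = K + (1 - K) := by rw [hR.hermitianPinv_mul_self_mul_hermitianPinv]
      _ = 1 := add_sub_cancel K 1
  · have hVKV : V * K * Vᴴ = R :=
      calc V * K * Vᴴ = R * Rp * R := by simp only [K, R, Matrix.mul_assoc]
        _ = R := hR.mul_hermitianPinv_mul_self
    calc V * (Vᴴ * Rp * σ a * Rp * V + c • (1 - K)) * Vᴴ
        = R * Rp * σ a * Rp * R + c • (R - V * K * Vᴴ) := by
          simp only [Matrix.mul_add, Matrix.add_mul, Matrix.mul_smul, Matrix.smul_mul,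
            Matrix.mul_sub, Matrix.sub_mul, Matrix.mul_one, R, Matrix.mul_assoc]
      _ = σ a := by
          rw [(hσ a).conj_hermitianPinv_of_le (hσR a) hR, hVKV, sub_self, smul_zero, add_zero]

end Matrix

lemma ptraceQ_one_kronecker_mul_pure {O Q : Type*} [Fintype O] [Fintype Q] [DecidableEq O]
    (v : O × Q → ℂ) (P : Matrix Q Q ℂ) :
    ptraceQ (((1 : Matrix O O ℂ) ⊗ₖ P) * Matrix.of fun i j => v i * (starRingEnd ℂ) (v j)) =
      of (Function.curry v) * Pᵀ * (of (Function.curry v))ᴴ := by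
  ext i j
  simp only [ptraceQ, of_apply, mul_apply, Fintype.sum_prod_type, kroneckerMap_apply, one_apply,
    conjTranspose_apply, transpose_apply, Function.curry_apply, ite_mul, one_mul, zero_mul]
  refine Finset.sum_congr rfl fun k _ => ?_
  rw [Finset.sum_comm]
  simp only [Finset.sum_ite_eq, Finset.mem_univ, if_true, Finset.sum_mul]
  exact Finset.sum_congr rfl fun k' _ => by rw [Complex.star_def]; ring

/-- Remote state preparation characterization (pure-state case):
a finite family of PSD operators on `O` can be remotely prepared from a pure
bipartite state `ρ` on `O × Q` iff the family sums to the reduced state of `ρ`. -/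
theorem remote_state_preparation
    {O Q ι : Type*} [Fintype O] [Fintype Q] [Fintype ι]
    [DecidableEq O] [DecidableEq Q]
    (v : O × Q → ℂ) (hv : ∑ i, ‖v i‖ ^ 2 = 1)
    (ρ : Matrix (O × Q) (O × Q) ℂ)
    (hρ : ρ = Matrix.of fun i j => v i * (starRingEnd ℂ) (v j))
    (σ : ι → Matrix O O ℂ) (hσ : ∀ a, (σ a).PosSemidef) :
    (∃ P : ι → Matrix Q Q ℂ,
        (∀ a, (P a).PosSemidef) ∧ (∑ a, P a = 1) ∧
        ∀ a, ptraceQ (((1 : Matrix O O ℂ) ⊗ₖ P a) * ρ) = σ a) ↔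
      ∑ a, σ a = ptraceQ ρ := by
  subst hρ
  have hreduced : ptraceQ (Matrix.of fun i j => v i * (starRingEnd ℂ) (v j)) =
      of (Function.curry v) * (of (Function.curry v))ᴴ := by
    simpa [one_kronecker_one] using ptraceQ_one_kronecker_mul_pure v 1
  simp only [hreduced, ptraceQ_one_kronecker_mul_pure]
  set V : Matrix O Q ℂ := of (Function.curry v)
  constructor
  · rintro ⟨P, -, hP1, hPσ⟩
    calc ∑ a, σ a = V * (∑ a, P a)ᵀ * Vᴴ := by
          simp only [← hPσ, transpose_sum, Matrix.mul_sum, Matrix.sum_mul]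
      _ = V * Vᴴ := by rw [hP1, transpose_one, Matrix.mul_one]
  · intro hsum
    have : Nonempty ι := by
      by_contra hι
      rw [not_nonempty_iff] at hι
      rw [Finset.univ_eq_empty, Finset.sum_empty, eq_comm, self_mul_conjTranspose_eq_zero] at hsum
      have hv0 (i : O × Q) : v i = 0 := congrFun (congrFun hsum i.1) i.2
      simp [hv0] at hv
    obtain ⟨P, hP, hP1, hPσ⟩ := exists_posSemidef_sum_eq_one_and_conj_eq V σ hσ hsum
    exact ⟨fun a => (P a)ᵀ, fun a => (hP a).transpose,
      by rw [← transpose_sum, hP1, transpose_one], fun a => by rw [transpose_transpose, hPσ]⟩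
end

section
/- Let C : ℝ → ℝ be twice differentiable with C'' ≤ b. Fix f_j < f_{j+1} and g ∈ [f_j, f_{j+1}], and write g = λ f_j + (1−λ) f_{j+1} with λ ∈ [0,1]. Then for every ω, λ C(ω − f_j) + (1−λ) C(ω − f_{j+1}) − C(ω − g) ≤ (b/8)(f_{j+1} − f_j)². -/
/-! Since `C'' ≤ b`, the function `t ↦ b t² / 2 - C t` is convex, so the Jensen gap of `C` is
at most that of `t ↦ b t² / 2`, namely `(b / 2) λ (1 - λ) (f_{j+1} - f_j)²`, and
`λ (1 - λ) ≤ 1 / 4`. -/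

open Set

section SecondDerivBound

variable {C C' C'' : ℝ → ℝ} {b : ℝ}

theorem convexOn_univ_half_mul_sq_sub_of_deriv2_le
    (hC' : ∀ x, HasDerivAt C (C' x) x) (hC'' : ∀ x, HasDerivAt C' (C'' x) x)
    (hCb : ∀ x, C'' x ≤ b) :
    ConvexOn ℝ univ (fun t => b / 2 * t ^ 2 - C t) := by
  have hd (t : ℝ) : HasDerivAt (fun t => b / 2 * t ^ 2 - C t) (b * t - C' t) t :=
    (((hasDerivAt_pow 2 t).const_mul (b / 2)).fun_sub (hC' t)).congr_deriv (by push_cast; ring)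
  have hd2 (t : ℝ) : HasDerivAt (fun t => b * t - C' t) (b - C'' t) t := by
    simpa using ((hasDerivAt_id' t).const_mul b).fun_sub (hC'' t)
  exact convexOn_of_hasDerivWithinAt2_nonneg convex_univ
    (fun t _ => (hd t).continuousAt.continuousWithinAt)
    (fun t _ => (hd t).hasDerivWithinAt) (fun t _ => (hd2 t).hasDerivWithinAt)
    (fun t _ => sub_nonneg.2 (hCb t))

theorem jensen_gap_le_of_deriv2_le
    (hC' : ∀ x, HasDerivAt C (C' x) x) (hC'' : ∀ x, HasDerivAt C' (C'' x) x)
    (hCb : ∀ x, C'' x ≤ b) (x y : ℝ) {lam : ℝ} (hlam₀ : 0 ≤ lam) (hlam₁ : lam ≤ 1) :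
    lam * C x + (1 - lam) * C y - C (lam * x + (1 - lam) * y)
      ≤ b / 2 * (lam * (1 - lam)) * (x - y) ^ 2 := by
  have hconv := (convexOn_univ_half_mul_sq_sub_of_deriv2_le hC' hC'' hCb).2
    (mem_univ x) (mem_univ y) hlam₀ (sub_nonneg.2 hlam₁) (add_sub_cancel lam 1)
  simp only [smul_eq_mul] at hconv
  linarith

end SecondDerivBound

theorem randomized_grid_estimate_bound_general
    (C C' C'' : ℝ → ℝ) (b : ℝ) (hb : 0 < b)
    (hC' : ∀ x, HasDerivAt C (C' x) x)
    (hC'' : ∀ x, HasDerivAt C' (C'' x) x)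
    (hCb : ∀ x, C'' x ≤ b)
    (fj fj1 : ℝ)
    (g : ℝ)
    (lam : ℝ) (hlam : lam ∈ Set.Icc (0 : ℝ) 1)
    (hgl : g = lam * fj + (1 - lam) * fj1) :
    ∀ ω : ℝ,
      lam * C (ω - fj) + (1 - lam) * C (ω - fj1) - C (ω - g) ≤ b / 8 * (fj1 - fj) ^ 2 := by
  intro ω
  have hgap := jensen_gap_le_of_deriv2_le hC' hC'' hCb (ω - fj) (ω - fj1) hlam.1 hlam.2
  have hω : lam * (ω - fj) + (1 - lam) * (ω - fj1) = ω - g := by rw [hgl]; ring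
  have hquarter : lam * (1 - lam) ≤ 1 / 4 := by nlinarith [sq_nonneg (2 * lam - 1)]
  calc lam * C (ω - fj) + (1 - lam) * C (ω - fj1) - C (ω - g)
      ≤ b / 2 * (lam * (1 - lam)) * (fj1 - fj) ^ 2 := by
        rw [← hω]; convert hgap using 2; ring
    _ ≤ b / 2 * (1 / 4) * (fj1 - fj) ^ 2 := by gcongr
    _ = b / 8 * (fj1 - fj) ^ 2 := by ring

/-- Randomizing between the two neighboring grid estimates costs at most
`(b/8)(f_{j+1} - f_j)²` relative to the intermediate estimate `g`. -/
theorem randomized_grid_estimate_bound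
    (C C' C'' : ℝ → ℝ) (b : ℝ) (hb : 0 < b)
    (hC' : ∀ x, HasDerivAt C (C' x) x)
    (hC'' : ∀ x, HasDerivAt C' (C'' x) x)
    (hCb : ∀ x, C'' x ≤ b)
    (fj fj1 : ℝ) (hf : fj < fj1)
    (g : ℝ) (hg : g ∈ Set.Icc fj fj1)
    (lam : ℝ) (hlam : lam ∈ Set.Icc (0 : ℝ) 1)
    (hgl : g = lam * fj + (1 - lam) * fj1) :
    ∀ ω : ℝ,
      lam * C (ω - fj) + (1 - lam) * C (ω - fj1) - C (ω - g) ≤ b / 8 * (fj1 - fj) ^ 2 :=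
  randomized_grid_estimate_bound_general C C' C'' b hb hC' hC'' hCb fj fj1 g lam hlam hgl
end

section
/- Let C : ℝ → ℝ satisfy the hypotheses: twice differentiable, nonnegative, C(0)=0, C'' ≤ b, monotone on each of (−∞,0] and [0,∞). Fix estimates f_1 < f_2 < ⋯ < f_N and define M(ω) = C(ω − f_1) for ω ≤ f_1, M(ω) = C(ω − f_N) for ω ≥ f_N, and M(ω) = 0 otherwise. Let g ∈ ℝ be arbitrary and let g̃ be the point of [f_1,f_N] nearest to g. Then for all ω, C(ω − g) ≥ C(ω − g̃) − M(ω). -/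
/-- Clipping step of the querier discretization bound: restricting an arbitrary
frequency estimate `g` to the nearest point `g̃` of `[f_1, f_N]` costs at most the
boundary penalty `M(ω)`. -/
theorem clipping_estimate_bound
    (C : ℝ → ℝ) (C' C'' : ℝ → ℝ) (b : ℝ) (hb : 0 < b)
    (hC' : ∀ x, HasDerivAt C (C' x) x)
    (hC'' : ∀ x, HasDerivAt C' (C'' x) x)
    (hCb : ∀ x, C'' x ≤ b)
    (hCpos : ∀ x, 0 ≤ C x) (hC0 : C 0 = 0)
    (hanti : AntitoneOn C (Set.Iic 0)) (hmono : MonotoneOn C (Set.Ici 0))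
    (N : ℕ) (hN : 0 < N) (f : Fin N → ℝ) (hf : StrictMono f)
    (f₁ fN : ℝ) (hf₁ : f₁ = f ⟨0, hN⟩) (hfN : fN = f ⟨N - 1, Nat.sub_lt hN one_pos⟩)
    (M : ℝ → ℝ)
    (hM : ∀ ω, M ω = if ω ≤ f₁ then C (ω - f₁) else if fN ≤ ω then C (ω - fN) else 0)
    (g : ℝ) (g' : ℝ) (hg' : g' = max f₁ (min g fN)) :
    ∀ ω : ℝ, C (ω - g) ≥ C (ω - g') - M ω := by
  intro ω
  have hf1N : f₁ ≤ fN := by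
    rw [hf₁, hfN]
    exact hf.monotone (by simp)
  have hM0 : 0 ≤ M ω := by
    rw [hM]; split_ifs
    · exact hCpos _
    · exact hCpos _
    · exact le_refl 0
  rcases lt_or_ge g f₁ with h1 | h1
  · -- g < f₁, so g' = f₁
    have hg'' : g' = f₁ := by
      rw [hg', min_eq_left (le_of_lt (lt_of_lt_of_le h1 hf1N)), max_eq_left h1.le]
    rw [hg'']
    rcases le_or_gt ω f₁ with h2 | h2
    · have : M ω = C (ω - f₁) := by rw [hM]; simp [h2]
      rw [this]
      linarith [hCpos (ω - g)]
    · have hmem1 : (0:ℝ) ≤ ω - f₁ := by linarith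
      have hmem2 : (0:ℝ) ≤ ω - g := by linarith
      have := hmono hmem1 hmem2 (by linarith : ω - f₁ ≤ ω - g)
      linarith
  · rcases le_or_gt g fN with h2 | h2
    · -- f₁ ≤ g ≤ fN, so g' = g
      have hg'' : g' = g := by rw [hg', min_eq_left h2, max_eq_right h1]
      rw [hg'']
      linarith
    · -- fN < g, so g' = fN
      have hg'' : g' = fN := by
        rw [hg', min_eq_right h2.le, max_eq_right hf1N]
      rw [hg'']
      rcases le_or_gt fN ω with h3 | h3
      · have : M ω = C (ω - fN) := by
          rw [hM]; split_ifs with h4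
          · have : f₁ = fN := le_antisymm hf1N (h3.trans h4)
            rw [this]
          · rfl
        rw [this]
        linarith [hCpos (ω - g)]
      · have hmem1 : ω - g ∈ Set.Iic (0:ℝ) := by simp; linarith
        have hmem2 : ω - fN ∈ Set.Iic (0:ℝ) := by simp; linarith
        have := hanti hmem1 hmem2 (by linarith : ω - g ≤ ω - fN)
        linarith
end

section
/- Let C : ℝ → ℝ be twice differentiable, nonnegative, with C(0)=0, C'' ≤ b, and monotone on (−∞,0] and on [0,∞). Let F = {f_1 < ⋯ < f_N}, p a probability measure on ℝ, and define M as in the clipping lemma. Then the optimal expected cost restricted to estimates in F exceeds the unrestricted optimal expected cost by at most max_j (b/8)(f_{j+1} − f_j)² + ∫ M(ω) dp(ω): S_C(p,F) − S_C(p,ℝ) ≤ max_j (b/8)(f_{j+1}−f_j)² + ∫ M(ω) p(ω) dω. -/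
/-!
Since `C'' ≤ b`, the function `t ↦ b/2 t² - C t` is convex. If an estimate `x` lies between
adjacent grid points `u < v`, this convexity says that the weighted average of the costs at `u`
and `v` (weights `(v - x)/(v - u)` and `(x - u)/(v - u)`) exceeds the cost at `x` by at most
`b/2 (x - u)(v - x) ≤ b/8 (v - u)²`, pointwise in `ω`; so the better of `u` and `v` does at
least as well after integrating against `q a · p`. If `x` lies outside the grid, clipping it to
the nearest end point costs at most `M ω`, by the monotonicity of `C` on each half-line.
Summing over the actions, whose probabilities `q a ω` add up to one, every strategy is matched by
a grid strategy up to the stated error, and the bound passes to the infima.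
-/

open MeasureTheory Set

lemma convexOn_half_mul_sq_sub {C C' C'' : ℝ → ℝ} {b : ℝ}
    (hC' : ∀ x, HasDerivAt C (C' x) x) (hC'' : ∀ x, HasDerivAt C' (C'' x) x)
    (hCb : ∀ x, C'' x ≤ b) : ConvexOn ℝ univ (fun t => b / 2 * t ^ 2 - C t) := by
  have hderiv : ∀ x, HasDerivAt (fun t => b / 2 * t ^ 2 - C t) (b * x - C' x) x := fun x =>
    (((hasDerivAt_pow 2 x).const_mul (b / 2)).sub (hC' x)).congr_deriv (by push_cast; ring)
  have hderiv2 : ∀ x, HasDerivAt (fun t => b * t - C' t) (b - C'' x) x := fun x =>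
    (((hasDerivAt_id x).const_mul b).sub (hC'' x)).congr_deriv (by simp)
  exact convexOn_of_hasDerivWithinAt2_nonneg convex_univ
    (continuous_iff_continuousAt.2 fun x => (hderiv x).continuousAt).continuousOn
    (fun x _ => (hderiv x).hasDerivWithinAt) (fun x _ => (hderiv2 x).hasDerivWithinAt)
    (fun x _ => sub_nonneg.2 (hCb x))

lemma sub_mul_add_sub_mul_le_of_convexOn {C : ℝ → ℝ} {b : ℝ}
    (hconv : ConvexOn ℝ univ (fun t => b / 2 * t ^ 2 - C t)) (hb : 0 ≤ b)
    {u x v : ℝ} (hux : u ≤ x) (hxv : x ≤ v) (ω : ℝ) :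
    (v - x) * C (ω - u) + (x - u) * C (ω - v) ≤ (v - u) * (C (ω - x) + b / 8 * (v - u) ^ 2) := by
  obtain rfl | huv := (hux.trans hxv).eq_or_lt
  · obtain rfl := le_antisymm hux hxv
    simp
  have hd : 0 < v - u := sub_pos.2 huv
  have hweights : (v - x) / (v - u) + (x - u) / (v - u) = 1 := by field_simp; ring
  have hpt : (v - x) / (v - u) * (ω - u) + (x - u) / (v - u) * (ω - v) = ω - x := by
    field_simp; ring
  have h := hconv.2 (mem_univ (ω - u)) (mem_univ (ω - v)) (div_nonneg (sub_nonneg.2 hxv) hd.le)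
    (div_nonneg (sub_nonneg.2 hux) hd.le) hweights
  simp only [smul_eq_mul, hpt] at h
  have h' := mul_le_mul_of_nonneg_left h hd.le
  field_simp at h'
  nlinarith [mul_nonneg (mul_nonneg hb hd.le) (sq_nonneg (u + v - 2 * x))]

/-- The function `M` of the clipping lemma, for a grid with end points `l ≤ r`. -/
noncomputable def clipCost (C : ℝ → ℝ) (l r ω : ℝ) : ℝ :=
  if ω ≤ l then C (ω - l) else if r ≤ ω then C (ω - r) else 0

section clipCost

variable {C : ℝ → ℝ} {l r : ℝ}

lemma clipCost_nonneg (hC : ∀ x, 0 ≤ C x) (ω : ℝ) : 0 ≤ clipCost C l r ω := by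
  unfold clipCost; split_ifs <;> simp [hC]

lemma le_add_clipCost_of_le_left (hC : ∀ x, 0 ≤ C x) (hmono : MonotoneOn C (Ici 0))
    {x : ℝ} (hx : x ≤ l) (ω : ℝ) : C (ω - l) ≤ C (ω - x) + clipCost C l r ω := by
  rcases le_or_gt ω l with hω | hω
  · rw [clipCost, if_pos hω]
    linarith [hC (ω - x)]
  · have h : C (ω - l) ≤ C (ω - x) :=
      hmono (sub_nonneg.2 hω.le) (sub_nonneg.2 (hx.trans hω.le)) (by linarith)
    linarith [clipCost_nonneg (l := l) (r := r) hC ω]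

lemma le_add_clipCost_of_right_le (hC : ∀ x, 0 ≤ C x) (hanti : AntitoneOn C (Iic 0))
    (hlr : l ≤ r) {x : ℝ} (hx : r ≤ x) (ω : ℝ) : C (ω - r) ≤ C (ω - x) + clipCost C l r ω := by
  rcases le_or_gt r ω with hω | hω
  · have h : C (ω - r) ≤ clipCost C l r ω := by
      rw [clipCost]
      split_ifs with hωl
      · rw [le_antisymm hlr (hω.trans hωl)]
      · rfl
    linarith [hC (ω - x)]
  · have h : C (ω - r) ≤ C (ω - x) :=
      hanti (sub_nonpos.2 (hω.le.trans hx)) (sub_nonpos.2 hω.le) (by linarith)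
    linarith [clipCost_nonneg (l := l) (r := r) hC ω]

end clipCost

lemma integral_mul_le_add_of_le {α : Type*} [MeasurableSpace α] {μ : Measure α}
    {F G H w : α → ℝ} (hle : ∀ ω, F ω ≤ G ω + H ω) (hw : ∀ ω, 0 ≤ w ω)
    (hF : Integrable (fun ω => F ω * w ω) μ) (hG : Integrable (fun ω => G ω * w ω) μ)
    (hH : Integrable (fun ω => H ω * w ω) μ) :
    ∫ ω, F ω * w ω ∂μ ≤ ∫ ω, G ω * w ω ∂μ + ∫ ω, H ω * w ω ∂μ := by
  rw [← integral_add hG hH]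
  exact integral_mono hF (hG.add hH) fun ω => by
    simpa only [add_mul] using mul_le_mul_of_nonneg_right (hle ω) (hw ω)

lemma min_integral_le_of_convexOn {C : ℝ → ℝ} {b : ℝ}
    (hconv : ConvexOn ℝ univ (fun t => b / 2 * t ^ 2 - C t)) (hb : 0 ≤ b)
    {μ : Measure ℝ} {w : ℝ → ℝ} (hw : ∀ ω, 0 ≤ w ω)
    (hwint : Integrable w μ) (hCw : ∀ g, Integrable (fun ω => C (ω - g) * w ω) μ)
    {u x v : ℝ} (hux : u ≤ x) (hxv : x ≤ v) :
    min (∫ ω, C (ω - u) * w ω ∂μ) (∫ ω, C (ω - v) * w ω ∂μ) ≤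
      ∫ ω, C (ω - x) * w ω ∂μ + b / 8 * (v - u) ^ 2 * ∫ ω, w ω ∂μ := by
  obtain rfl | huv := (hux.trans hxv).eq_or_lt
  · obtain rfl := le_antisymm hux hxv
    simp
  have hcomb := integral_mono (μ := μ)
    (f := fun ω => (v - x) * (C (ω - u) * w ω) + (x - u) * (C (ω - v) * w ω))
    (g := fun ω => (v - u) * (C (ω - x) * w ω) + (v - u) * (b / 8 * (v - u) ^ 2) * w ω)
    (((hCw u).const_mul _).add ((hCw v).const_mul _))
    (((hCw x).const_mul _).add (hwint.const_mul _)) fun ω => by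
      have h := mul_le_mul_of_nonneg_right
        (sub_mul_add_sub_mul_le_of_convexOn hconv hb hux hxv ω) (hw ω)
      dsimp only
      linarith
  rw [integral_add ((hCw u).const_mul _) ((hCw v).const_mul _),
    integral_add ((hCw x).const_mul _) (hwint.const_mul _), integral_const_mul, integral_const_mul,
    integral_const_mul, integral_const_mul] at hcomb
  refine le_of_mul_le_mul_left ?_ (sub_pos.2 huv)
  nlinarith [mul_le_mul_of_nonneg_left (min_le_left (∫ ω, C (ω - u) * w ω ∂μ)
      (∫ ω, C (ω - v) * w ω ∂μ)) (sub_nonneg.2 hxv),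
    mul_le_mul_of_nonneg_left (min_le_right (∫ ω, C (ω - u) * w ω ∂μ)
      (∫ ω, C (ω - v) * w ω ∂μ)) (sub_nonneg.2 hux)]

theorem Fin.exists_castSucc_le_lt_succ {α : Type*} [LinearOrder α] {N : ℕ}
    {f : Fin (N + 1) → α} {x : α} (h0 : f 0 ≤ x) (hN : x < f (Fin.last N)) :
    ∃ j : Fin N, f j.castSucc ≤ x ∧ x < f j.succ := by
  induction N with
  | zero => exact absurd (h0.trans_lt hN) (lt_irrefl _)
  | succ n ih =>
    by_cases hx : x < f (Fin.last n).castSucc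
    · obtain ⟨j, hj⟩ := ih (f := fun i => f i.castSucc) h0 hx
      exact ⟨j.castSucc, hj⟩
    · exact ⟨Fin.last n, not_lt.1 hx, hN⟩

section grid

variable {C : ℝ → ℝ} {b : ℝ} {N : ℕ} {f : Fin (N + 1) → ℝ} {μ : Measure ℝ} {w : ℝ → ℝ}

lemma exists_mem_range_integral_le_of_mem_Ico
    (hconv : ConvexOn ℝ univ (fun t => b / 2 * t ^ 2 - C t)) (hb : 0 ≤ b)
    (hw : ∀ ω, 0 ≤ w ω) (hwint : Integrable w μ)
    (hCw : ∀ g, Integrable (fun ω => C (ω - g) * w ω) μ) {x : ℝ}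
    (h0 : f 0 ≤ x) (hN : x < f (Fin.last N)) :
    ∃ y ∈ range f, ∫ ω, C (ω - y) * w ω ∂μ ≤ ∫ ω, C (ω - x) * w ω ∂μ +
      (⨆ j : Fin N, b / 8 * (f j.succ - f j.castSucc) ^ 2) * ∫ ω, w ω ∂μ := by
  obtain ⟨j, hjx, hxj⟩ := Fin.exists_castSucc_le_lt_succ h0 hN
  have hgap : b / 8 * (f j.succ - f j.castSucc) ^ 2 * ∫ ω, w ω ∂μ ≤
      (⨆ j : Fin N, b / 8 * (f j.succ - f j.castSucc) ^ 2) * ∫ ω, w ω ∂μ :=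
    mul_le_mul_of_nonneg_right
      (le_ciSup (f := fun j : Fin N => b / 8 * (f j.succ - f j.castSucc) ^ 2)
        (Set.finite_range _).bddAbove j)
      (integral_nonneg hw)
  rcases min_le_iff.1 (min_integral_le_of_convexOn hconv hb hw hwint hCw hjx hxj.le) with h | h
  · exact ⟨_, mem_range_self j.castSucc, by linarith⟩
  · exact ⟨_, mem_range_self j.succ, by linarith⟩

lemma exists_mem_range_integral_le
    (hconv : ConvexOn ℝ univ (fun t => b / 2 * t ^ 2 - C t)) (hb : 0 ≤ b)
    (hC : ∀ x, 0 ≤ C x) (hanti : AntitoneOn C (Iic 0)) (hmono : MonotoneOn C (Ici 0))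
    (hf : Monotone f) (hw : ∀ ω, 0 ≤ w ω) (hwint : Integrable w μ)
    (hCw : ∀ g, Integrable (fun ω => C (ω - g) * w ω) μ)
    (hMw : Integrable (fun ω => clipCost C (f 0) (f (Fin.last N)) ω * w ω) μ) (x : ℝ) :
    ∃ y ∈ range f, ∫ ω, C (ω - y) * w ω ∂μ ≤ ∫ ω, C (ω - x) * w ω ∂μ +
      (⨆ j : Fin N, b / 8 * (f j.succ - f j.castSucc) ^ 2) * ∫ ω, w ω ∂μ +
      ∫ ω, clipCost C (f 0) (f (Fin.last N)) ω * w ω ∂μ := by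
  have hgap : 0 ≤ (⨆ j : Fin N, b / 8 * (f j.succ - f j.castSucc) ^ 2) * ∫ ω, w ω ∂μ :=
    mul_nonneg (Real.iSup_nonneg fun j => mul_nonneg (div_nonneg hb (by norm_num)) (sq_nonneg _))
      (integral_nonneg hw)
  have hclip : 0 ≤ ∫ ω, clipCost C (f 0) (f (Fin.last N)) ω * w ω ∂μ :=
    integral_nonneg fun ω => mul_nonneg (clipCost_nonneg hC ω) (hw ω)
  rcases lt_or_ge x (f 0) with h0 | h0
  · have h := integral_mul_le_add_of_le (le_add_clipCost_of_le_left hC hmono h0.le) hw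
      (hCw _) (hCw x) hMw
    exact ⟨_, mem_range_self 0, by linarith⟩
  rcases lt_or_ge x (f (Fin.last N)) with hN | hN
  · obtain ⟨y, hy, h⟩ := exists_mem_range_integral_le_of_mem_Ico hconv hb hw hwint hCw h0 hN
    exact ⟨y, hy, by linarith⟩
  · have h := integral_mul_le_add_of_le
      (le_add_clipCost_of_right_le hC hanti (hf (Fin.zero_le _)) hN) hw (hCw _) (hCw x) hMw
    exact ⟨_, mem_range_self (Fin.last N), by linarith⟩

lemma exists_mem_range_sum_integral_le [IsProbabilityMeasure μ] {A : Type*} [Fintype A]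
    (hconv : ConvexOn ℝ univ (fun t => b / 2 * t ^ 2 - C t)) (hb : 0 ≤ b)
    (hC : ∀ x, 0 ≤ C x) (hanti : AntitoneOn C (Iic 0)) (hmono : MonotoneOn C (Ici 0))
    (hf : Monotone f) {q : A → ℝ → ℝ} (hq_meas : ∀ a, Measurable (q a))
    (hq_nonneg : ∀ a ω, 0 ≤ q a ω) (hq_sum : ∀ ω, ∑ a, q a ω = 1)
    (hCq : ∀ a g, Integrable (fun ω => C (ω - g) * q a ω) μ)
    (hM : Integrable (clipCost C (f 0) (f (Fin.last N))) μ) (g : A → ℝ) :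
    ∃ g' : A → ℝ, (∀ a, g' a ∈ range f) ∧
      ∑ a, ∫ ω, C (ω - g' a) * q a ω ∂μ ≤ ∑ a, ∫ ω, C (ω - g a) * q a ω ∂μ +
        ((⨆ j : Fin N, b / 8 * (f j.succ - f j.castSucc) ^ 2) +
          ∫ ω, clipCost C (f 0) (f (Fin.last N)) ω ∂μ) := by
  have hq_le : ∀ a ω, ‖q a ω‖ ≤ 1 := fun a ω => by
    rw [Real.norm_of_nonneg (hq_nonneg a ω), ← hq_sum ω]
    exact Finset.single_le_sum (fun i _ => hq_nonneg i ω) (Finset.mem_univ a)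
  have hq_int : ∀ a, Integrable (q a) μ := fun a =>
    (integrable_const 1).mono' (hq_meas a).aestronglyMeasurable (ae_of_all _ (hq_le a))
  have hMq : ∀ a, Integrable (fun ω => clipCost C (f 0) (f (Fin.last N)) ω * q a ω) μ :=
    fun a => hM.mul_bdd (hq_meas a).aestronglyMeasurable (ae_of_all _ (hq_le a))
  have hsum_q : ∑ a, ∫ ω, q a ω ∂μ = 1 := by
    rw [← integral_finsetSum _ fun a _ => hq_int a]
    simp [hq_sum]
  have hsum_M : ∑ a, ∫ ω, clipCost C (f 0) (f (Fin.last N)) ω * q a ω ∂μ =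
      ∫ ω, clipCost C (f 0) (f (Fin.last N)) ω ∂μ := by
    rw [← integral_finsetSum _ fun a _ => hMq a]
    simp [← Finset.mul_sum, hq_sum]
  choose g' hg'_mem hg'_le using fun a => exists_mem_range_integral_le hconv hb hC hanti hmono hf
    (hq_nonneg a) (hq_int a) (hCq a) (hMq a) (g a)
  refine ⟨g', hg'_mem, ?_⟩
  calc ∑ a, ∫ ω, C (ω - g' a) * q a ω ∂μ
      ≤ ∑ a, (∫ ω, C (ω - g a) * q a ω ∂μ +
          (⨆ j : Fin N, b / 8 * (f j.succ - f j.castSucc) ^ 2) * ∫ ω, q a ω ∂μ +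
          ∫ ω, clipCost C (f 0) (f (Fin.last N)) ω * q a ω ∂μ) :=
        Finset.sum_le_sum fun a _ => hg'_le a
    _ = _ := by
        rw [Finset.sum_add_distrib, Finset.sum_add_distrib, ← Finset.mul_sum, hsum_q, hsum_M]
        ring

end grid

lemma iInf_iInf_subtype_le_add {ι α : Type*} [Nonempty ι] [Nonempty α] {P : α → Prop}
    {F : ι → α → ℝ} {E : ℝ} (hF : ∀ i a, 0 ≤ F i a)
    (h : ∀ i a, ∃ a', P a' ∧ F i a' ≤ F i a + E) :
    ⨅ i, ⨅ a : Subtype P, F i a ≤ (⨅ i, ⨅ a, F i a) + E := by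
  rw [← sub_le_iff_le_add]
  refine le_ciInf fun i => le_ciInf fun a => ?_
  obtain ⟨a', hPa', ha'⟩ := h i a
  rw [sub_le_iff_le_add]
  calc ⨅ i, ⨅ a : Subtype P, F i a
      ≤ ⨅ a : Subtype P, F i a :=
        ciInf_le ⟨0, by rintro _ ⟨j, rfl⟩; exact Real.iInf_nonneg fun a => hF j a⟩ i
    _ ≤ F i a' :=
        ciInf_le (f := fun a : Subtype P => F i a)
          ⟨0, by rintro _ ⟨a, rfl⟩; exact hF i a⟩ ⟨a', hPa'⟩
    _ ≤ F i a + E := ha'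

theorem querier_discretization_error_general
    (C C' C'' : ℝ → ℝ) (b : ℝ) (hb : 0 < b)
    (hC' : ∀ x, HasDerivAt C (C' x) x)
    (hC'' : ∀ x, HasDerivAt C' (C'' x) x)
    (hCb : ∀ x, C'' x ≤ b)
    (hCpos : ∀ x, 0 ≤ C x)
    (hanti : AntitoneOn C (Set.Iic 0)) (hmono : MonotoneOn C (Set.Ici 0))
    (N : ℕ) (f : Fin (N + 1) → ℝ) (hf : StrictMono f)
    (M : ℝ → ℝ)
    (hM : ∀ ω, M ω = if ω ≤ f 0 then C (ω - f 0)
      else if f (Fin.last N) ≤ ω then C (ω - f (Fin.last N)) else 0)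
    (p : Measure ℝ) [IsProbabilityMeasure p] (hMint : Integrable M p)
    {A : Type*} [Fintype A] [Nonempty A]
    (𝒬 : Set (A → ℝ → ℝ)) (h𝒬ne : 𝒬.Nonempty)
    (h𝒬 : ∀ q ∈ 𝒬, ∀ a, Measurable (q a) ∧ (∀ ω, 0 ≤ q a ω) ∧ ∀ ω, ∑ b', q b' ω = 1)
    (cost : (A → ℝ → ℝ) → (A → ℝ) → ℝ)
    (hcost : ∀ q g, cost q g = ∑ a, ∫ ω, C (ω - g a) * q a ω ∂p)
    (hint : ∀ q ∈ 𝒬, ∀ a, ∀ g : ℝ, Integrable (fun ω => C (ω - g) * q a ω) p) :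
    (⨅ q : 𝒬, ⨅ g : {g : A → ℝ // ∀ a, g a ∈ Set.range f}, cost q.1 g.1) -
        (⨅ q : 𝒬, ⨅ g : A → ℝ, cost q.1 g) ≤
      (⨆ j : Fin N, b / 8 * (f j.succ - f j.castSucc) ^ 2) + ∫ ω, M ω ∂p := by
  obtain rfl : M = clipCost C (f 0) (f (Fin.last N)) := funext hM
  have hconv := convexOn_half_mul_sq_sub hC' hC'' hCb
  have := h𝒬ne.to_subtype
  rw [sub_le_iff_le_add']
  refine iInf_iInf_subtype_le_add (fun q g => ?_) (fun q g => ?_)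
  · rw [hcost]
    exact Finset.sum_nonneg fun a _ =>
      integral_nonneg fun ω => mul_nonneg (hCpos _) ((h𝒬 q.1 q.2 a).2.1 ω)
  · simp only [hcost]
    exact exists_mem_range_sum_integral_le hconv hb.le hCpos hanti hmono hf.monotone
      (fun a => (h𝒬 q.1 q.2 a).1) (fun a => (h𝒬 q.1 q.2 a).2.1)
      (h𝒬 q.1 q.2 (Classical.arbitrary A)).2.2 (hint q.1 q.2) hMint g

/-- Main querier discretization error theorem: the optimal expected cost with
estimates restricted to the grid `F = {f 0 < f 1 < ⋯ < f N}` exceeds the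
unrestricted optimum by at most `max_j (b/8)(f_{j+1} - f_j)² + ∫ M dp`. -/
theorem querier_discretization_error
    (C C' C'' : ℝ → ℝ) (b : ℝ) (hb : 0 < b)
    (hC' : ∀ x, HasDerivAt C (C' x) x)
    (hC'' : ∀ x, HasDerivAt C' (C'' x) x)
    (hCb : ∀ x, C'' x ≤ b)
    (hCpos : ∀ x, 0 ≤ C x) (hC0 : C 0 = 0)
    (hanti : AntitoneOn C (Set.Iic 0)) (hmono : MonotoneOn C (Set.Ici 0))
    (N : ℕ) (f : Fin (N + 1) → ℝ) (hf : StrictMono f)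
    (M : ℝ → ℝ)
    (hM : ∀ ω, M ω = if ω ≤ f 0 then C (ω - f 0)
      else if f (Fin.last N) ≤ ω then C (ω - f (Fin.last N)) else 0)
    (p : Measure ℝ) [IsProbabilityMeasure p] (hMint : Integrable M p)
    {A : Type*} [Fintype A] [Nonempty A]
    (𝒬 : Set (A → ℝ → ℝ)) (h𝒬ne : 𝒬.Nonempty)
    (h𝒬 : ∀ q ∈ 𝒬, ∀ a, Measurable (q a) ∧ (∀ ω, 0 ≤ q a ω) ∧ ∀ ω, ∑ b', q b' ω = 1)
    (cost : (A → ℝ → ℝ) → (A → ℝ) → ℝ)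
    (hcost : ∀ q g, cost q g = ∑ a, ∫ ω, C (ω - g a) * q a ω ∂p)
    (hint : ∀ q ∈ 𝒬, ∀ a, ∀ g : ℝ, Integrable (fun ω => C (ω - g) * q a ω) p) :
    (⨅ q : 𝒬, ⨅ g : {g : A → ℝ // ∀ a, g a ∈ Set.range f}, cost q.1 g.1) -
        (⨅ q : 𝒬, ⨅ g : A → ℝ, cost q.1 g) ≤
      (⨆ j : Fin N, b / 8 * (f j.succ - f j.castSucc) ^ 2) + ∫ ω, M ω ∂p :=
  querier_discretization_error_general C C' C'' b hb hC' hC'' hCb hCpos hanti hmono N f hf M hM p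
    hMint 𝒬 h𝒬ne h𝒬 cost hcost hint
end

section
/- Let ρ be a density operator of rank r on a finite-dimensional Hilbert space, and consider the SDP minimizing Σ_a tr(σ_a A_a) over σ_a ≥ 0 with Σ_a σ_a = ρ, where the A_a are Hermitian. Then there exists an optimal solution with at most r² nonzero σ_a. -/
/-!
The feasible set is compact, so an optimal solution exists; take one with the fewest nonzero
`σ a`. Each `σ a` satisfies `0 ≤ σ a ≤ ρ`, hence vanishes on `ker ρ` and lies in the corner of the
support of `ρ`, a space of dimension `r²`. Hermitian matrices that are independent over `ℝ` are
independent over `ℂ`, so more than `r²` nonzero `σ a` admit a real dependence `∑ c a • σ a = 0`,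
normalised so that `|c a| ≤ 1` and `c a₀ = 1`. Then `σ ± c • σ` are both feasible, optimality forces
the linear cost to vanish on `c • σ`, and `σ - c • σ` is an optimal solution without the outcome
`a₀`.
-/

open Matrix
open scoped ComplexOrder MatrixOrder

namespace Matrix

variable {𝕜 n : Type*} [RCLike 𝕜] [Fintype n]

theorem mulVec_eq_zero_of_nonneg_of_le {σ ρ : Matrix n n 𝕜} (hσ : 0 ≤ σ) (hσρ : σ ≤ ρ)
    {v : n → 𝕜} (hv : ρ *ᵥ v = 0) : σ *ᵥ v = 0 := by
  refine (hσ.posSemidef.dotProduct_mulVec_zero_iff v).1 (le_antisymm ?_ ?_)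
  · have h := (le_iff.1 hσρ).dotProduct_mulVec_nonneg v
    rwa [sub_mulVec, hv, dotProduct_sub, dotProduct_zero, zero_sub, neg_nonneg] at h
  · exact hσ.posSemidef.dotProduct_mulVec_nonneg v

/-- The corner `P * X * P` of the support projection `P` of `ρ`. -/
def cornerSubmodule (ρ : Matrix n n 𝕜) : Submodule 𝕜 (Matrix n n 𝕜) where
  carrier := {X | ∀ v, ρ *ᵥ v = 0 → X *ᵥ v = 0 ∧ Xᴴ *ᵥ v = 0}
  add_mem' {X Y} hX hY v hv := by
    simp [add_mulVec, (hX v hv).1, (hX v hv).2, (hY v hv).1, (hY v hv).2]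
  zero_mem' v _ := by simp
  smul_mem' c X hX v hv := by
    simp [smul_mulVec, (hX v hv).1, (hX v hv).2]

theorem mem_cornerSubmodule_of_nonneg_of_le {σ ρ : Matrix n n 𝕜} (hσ : 0 ≤ σ) (hσρ : σ ≤ ρ) :
    σ ∈ cornerSubmodule ρ := fun _ hv =>
  ⟨mulVec_eq_zero_of_nonneg_of_le hσ hσρ hv,
    hσ.posSemidef.isHermitian.eq.symm ▸ mulVec_eq_zero_of_nonneg_of_le hσ hσρ hv⟩

theorem IsHermitian.star_eigenvectorUnitary_mul_mul_apply_eq_zero [DecidableEq n]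
    {ρ X : Matrix n n 𝕜} (hρ : ρ.IsHermitian) (hX : ∀ v, ρ *ᵥ v = 0 → X *ᵥ v = 0)
    {j : n} (hj : hρ.eigenvalues j = 0) (i : n) :
    (star (hρ.eigenvectorUnitary : Matrix n n 𝕜) * X * (hρ.eigenvectorUnitary : Matrix n n 𝕜))
      i j = 0 := by
  have hker : X *ᵥ (hρ.eigenvectorBasis j).ofLp = 0 :=
    hX _ (by rw [hρ.mulVec_eigenvectorBasis, hj, zero_smul])
  have hcol := congrFun (mulVec_single_one
    (star (hρ.eigenvectorUnitary : Matrix n n 𝕜) * X * (hρ.eigenvectorUnitary : Matrix n n 𝕜)) j) i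
  rw [← mulVec_mulVec, hρ.eigenvectorUnitary_mulVec, ← mulVec_mulVec, hker, mulVec_zero] at hcol
  simpa using hcol.symm

theorem finrank_cornerSubmodule_le {ρ : Matrix n n 𝕜} (hρ : ρ.IsHermitian) :
    Module.finrank 𝕜 (cornerSubmodule ρ) ≤ ρ.rank ^ 2 := by
  classical
  set U : Matrix n n 𝕜 := (hρ.eigenvectorUnitary : Matrix n n 𝕜)
  let S := {i // hρ.eigenvalues i ≠ 0}
  let Φ : Matrix n n 𝕜 →ₗ[𝕜] Matrix S S 𝕜 :=
    { toFun X := (star U * X * U).submatrix Subtype.val Subtype.val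
      map_add' X Y := by simp [mul_add, add_mul, submatrix_add]
      map_smul' c X := by simp [submatrix_smul] }
  have hinj : Function.Injective (Φ ∘ₗ (cornerSubmodule ρ).subtype) := by
    rw [← LinearMap.ker_eq_bot, LinearMap.ker_eq_bot']
    rintro ⟨X, hX⟩ hΦ
    have hconj : star U * X * U = 0 := by
      ext i j
      by_cases hj : hρ.eigenvalues j = 0
      · exact hρ.star_eigenvectorUnitary_mul_mul_apply_eq_zero (fun v hv => (hX v hv).1) hj i
      by_cases hi : hρ.eigenvalues i = 0
      · have := hρ.star_eigenvectorUnitary_mul_mul_apply_eq_zero (fun v hv => (hX v hv).2) hi j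
        simpa [← conjTranspose_apply, conjTranspose_mul, star_eq_conjTranspose, mul_assoc, U]
          using congrArg star this
      · exact congrFun (congrFun hΦ ⟨i, hi⟩) ⟨j, hj⟩
    have hU : U * star U = 1 := Unitary.coe_mul_star_self _
    refine Subtype.ext ?_
    calc X = U * star U * X * (U * star U) := by rw [hU, one_mul, mul_one]
      _ = U * (star U * X * U) * star U := by simp only [mul_assoc]
      _ = 0 := by rw [hconj, mul_zero, zero_mul]
  calc Module.finrank 𝕜 (cornerSubmodule ρ) ≤ Module.finrank 𝕜 (Matrix S S 𝕜) :=
        LinearMap.finrank_le_finrank_of_injective hinj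
    _ = ρ.rank ^ 2 := by
      rw [Module.finrank_matrix, Module.finrank_self, hρ.rank_eq_card_non_zero_eigs, sq, mul_one]

end Matrix

theorem LinearIndepOn.complex_of_real {M ι : Type*} [AddCommGroup M] [Module ℂ M] [Module ℝ M]
    [IsScalarTower ℝ ℂ M] [StarAddMonoid M] [StarModule ℂ M] {v : ι → M} {s : Finset ι}
    (hv : ∀ i ∈ s, IsSelfAdjoint (v i)) (h : LinearIndepOn ℝ v s) : LinearIndepOn ℂ v s := by
  rw [linearIndepOn_finset_iff] at h ⊢
  intro f hf i hi
  have hconj : ∑ i ∈ s, star (f i) • v i = 0 := by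
    rw [← star_zero, ← hf, star_sum]
    exact Finset.sum_congr rfl fun i hi => by rw [star_smul, (hv i hi).star_eq]
  have hre : ∑ i ∈ s, (f i).re • v i = 0 := by
    have hsplit (z : ℂ) (x : M) : z.re • x = (2⁻¹ : ℂ) • (z • x + star z • x) := by
      rw [← algebraMap_smul ℂ, Complex.coe_algebraMap, Complex.re_eq_add_conj, ← add_smul,
        smul_smul, div_eq_inv_mul, Complex.star_def]
    simp only [hsplit, ← Finset.smul_sum, Finset.sum_add_distrib, hf, hconj, add_zero, smul_zero]
  have him : ∑ i ∈ s, (f i).im • v i = 0 := by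
    have hsplit (z : ℂ) (x : M) : z.im • x = (2 * Complex.I)⁻¹ • (z • x - star z • x) := by
      rw [← algebraMap_smul ℂ, Complex.coe_algebraMap, Complex.im_eq_sub_conj, ← sub_smul,
        smul_smul, div_eq_inv_mul, Complex.star_def]
    simp only [hsplit, ← Finset.smul_sum, Finset.sum_sub_distrib, hf, hconj, sub_zero, smul_zero]
  exact Complex.ext (h _ hre i hi) (h _ him i hi)

namespace Matrix

variable {n ι : Type*} [Fintype n]

theorem card_le_rank_sq_of_linearIndepOn {ρ : Matrix n n ℂ} (hρ : ρ.IsHermitian)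
    {σ : ι → Matrix n n ℂ} {s : Finset ι} (hσ : ∀ a ∈ s, 0 ≤ σ a ∧ σ a ≤ ρ)
    (h : LinearIndepOn ℝ σ s) : s.card ≤ ρ.rank ^ 2 := by
  have hℂ : LinearIndependent ℂ fun a : s => σ a :=
    h.complex_of_real fun a ha => (hσ a ha).1.posSemidef.isHermitian
  have hW : LinearIndependent ℂ fun a : s =>
      (⟨σ a, mem_cornerSubmodule_of_nonneg_of_le (hσ a a.2).1 (hσ a a.2).2⟩ :
        cornerSubmodule ρ) :=
    LinearIndependent.of_comp (cornerSubmodule ρ).subtype hℂ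
  simpa using hW.fintype_card_le_finrank.trans (finrank_cornerSubmodule_le hρ)

end Matrix

theorem exists_dependence_abs_le_one_of_not_linearIndepOn {𝕜 M ι : Type*} [Field 𝕜]
    [LinearOrder 𝕜] [IsStrictOrderedRing 𝕜] [AddCommGroup M] [Module 𝕜 M] [Fintype ι]
    {v : ι → M} {s : Finset ι} (h : ¬ LinearIndepOn 𝕜 v s) :
    ∃ c : ι → 𝕜, ∑ a, c a • v a = 0 ∧ (∀ a, |c a| ≤ 1) ∧ ∃ a₀ ∈ s, c a₀ = 1 := by
  classical
  obtain ⟨f, hf, i, hi, hfi⟩ := not_linearIndepOn_finset_iff.1 h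
  obtain ⟨a₀, ha₀, hmax⟩ := s.exists_max_image (|f ·|) ⟨i, hi⟩
  have hfa₀ : f a₀ ≠ 0 := abs_pos.1 ((abs_pos.2 hfi).trans_le (hmax i hi))
  refine ⟨fun a => if a ∈ s then f a / f a₀ else 0, ?_, fun a => ?_, a₀, ha₀, by simp [ha₀, hfa₀]⟩
  · simp_rw [ite_smul, zero_smul, Finset.sum_ite_mem, Finset.univ_inter, div_eq_inv_mul, mul_smul,
      ← Finset.smul_sum, hf, smul_zero]
  · dsimp only
    split_ifs with ha
    · rw [abs_div]
      exact div_le_one_of_le₀ (hmax a ha) (abs_nonneg _)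
    · simp

theorem IsMinOn.map_eq_zero_of_add_mem_of_sub_mem {E β F : Type*} [AddGroup E] [AddCommGroup β]
    [LinearOrder β] [IsOrderedAddMonoid β] [FunLike F E β] [AddMonoidHomClass F E β] {f : F}
    {s : Set E} {x v : E} (hx : IsMinOn f s x) (hadd : x + v ∈ s) (hsub : x - v ∈ s) : f v = 0 := by
  have h₁ := isMinOn_iff.1 hx _ hadd
  have h₂ := isMinOn_iff.1 hx _ hsub
  rw [map_add] at h₁
  rw [map_sub] at h₂
  exact le_antisymm (by simpa using h₂) (by simpa using h₁)

namespace MeasurementSDP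

variable {n ι : Type*} [Fintype ι]

def feasibleSet (ρ : Matrix n n ℂ) : Set (ι → Matrix n n ℂ) :=
  {σ | (∀ a, 0 ≤ σ a) ∧ ∑ a, σ a = ρ}

def cost [Fintype n] (A : ι → Matrix n n ℂ) : (ι → Matrix n n ℂ) →ₗ[ℝ] ℝ where
  toFun σ := (∑ a, (σ a * A a).trace).re
  map_add' σ τ := by simp [add_mul, trace_add, Finset.sum_add_distrib]
  map_smul' r σ := by simp [Finset.mul_sum]

variable {ρ : Matrix n n ℂ} {σ : ι → Matrix n n ℂ}

theorem le_of_mem_feasibleSet (hσ : σ ∈ feasibleSet ρ) (a : ι) : σ a ≤ ρ :=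
  hσ.2 ▸ Finset.single_le_sum (fun b _ => hσ.1 b) (Finset.mem_univ a)

theorem feasibleSet_nonempty [Nonempty ι] (hρ : 0 ≤ ρ) :
    (feasibleSet ρ : Set (ι → _)).Nonempty := by
  classical
  obtain ⟨a₀⟩ := ‹Nonempty ι›
  refine ⟨Pi.single a₀ ρ, fun a => ?_, by simp⟩
  rcases eq_or_ne a a₀ with rfl | ha
  · simpa using hρ
  · simp [ha]

theorem isCompact_feasibleSet [Fintype n] (ρ : Matrix n n ℂ) :
    IsCompact (feasibleSet ρ : Set (ι → _)) := by
  classical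
  open scoped Matrix.Norms.L2Operator in
  refine Metric.isCompact_of_isClosed_isBounded ?_ ?_
  · simp only [feasibleSet, Set.ofPred_and, Set.ofPred_forall]
    exact (isClosed_iInter fun a => isClosed_le continuous_const (continuous_apply a)).inter
      (isClosed_eq (continuous_finsetSum _ fun a _ => continuous_apply a) continuous_const)
  · refine (Metric.isBounded_closedBall (x := 0) (r := ‖ρ‖)).subset fun σ hσ => ?_
    rw [Metric.mem_closedBall, dist_zero_right]
    exact (pi_norm_le_iff_of_nonneg (norm_nonneg ρ)).2 fun a =>
      CStarAlgebra.norm_le_norm_of_nonneg_of_le (hσ.1 a) (le_of_mem_feasibleSet hσ a)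

theorem exists_isMinOn_cost [Fintype n] [Nonempty ι] (hρ : 0 ≤ ρ) (A : ι → Matrix n n ℂ) :
    ∃ σ ∈ feasibleSet ρ, IsMinOn (cost A) (feasibleSet ρ) σ :=
  (isCompact_feasibleSet ρ).exists_isMinOn (feasibleSet_nonempty hρ)
    (cost A).continuous_of_finiteDimensional.continuousOn

theorem add_smul_mem_feasibleSet (hσ : σ ∈ feasibleSet ρ) {c : ι → ℝ} (hc : ∑ a, c a • σ a = 0)
    (hc₁ : ∀ a, 0 ≤ 1 + c a) : σ + c • σ ∈ feasibleSet ρ := by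
  refine ⟨fun a => ?_, ?_⟩
  · have h : σ a + c a • σ a = (1 + c a) • σ a := by rw [add_smul, one_smul]
    rw [Pi.add_apply, Pi.smul_apply', h]
    exact ((hσ.1 a).posSemidef.smul (hc₁ a)).nonneg
  · simp only [Pi.add_apply, Pi.smul_apply', Finset.sum_add_distrib, hσ.2, hc, add_zero]

open Classical in
theorem exists_isMinOn_card_lt [Fintype n] (A : ι → Matrix n n ℂ) (hσ : σ ∈ feasibleSet ρ)
    (hmin : IsMinOn (cost A) (feasibleSet ρ) σ)
    (hdep : ¬ LinearIndepOn ℝ σ (Finset.univ.filter fun a => σ a ≠ 0)) :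
    ∃ τ ∈ feasibleSet ρ, IsMinOn (cost A) (feasibleSet ρ) τ ∧
      (Finset.univ.filter fun a => τ a ≠ 0).card < (Finset.univ.filter fun a => σ a ≠ 0).card := by
  obtain ⟨c, hc, hc₁, a₀, ha₀, hca₀⟩ := exists_dependence_abs_le_one_of_not_linearIndepOn hdep
  have hadd : σ + c • σ ∈ feasibleSet ρ :=
    add_smul_mem_feasibleSet hσ hc fun a => by linarith [(abs_le.1 (hc₁ a)).1]
  have hsub : σ - c • σ ∈ feasibleSet ρ := by
    have := add_smul_mem_feasibleSet hσ (c := -c) (by simp [hc])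
      fun a => by rw [Pi.neg_apply]; linarith [(abs_le.1 (hc₁ a)).2]
    rwa [neg_smul, ← sub_eq_add_neg] at this
  have hflat : cost A (c • σ) = 0 := hmin.map_eq_zero_of_add_mem_of_sub_mem hadd hsub
  have hτ (a : ι) : (σ - c • σ) a = (1 - c a) • σ a := by
    rw [Pi.sub_apply, Pi.smul_apply', sub_smul, one_smul]
  refine ⟨σ - c • σ, hsub, fun τ hτρ => ?_, Finset.card_lt_card ?_⟩
  · simpa [map_sub, hflat] using hmin hτρ
  · refine (Finset.ssubset_iff_of_subset fun a => ?_).2 ⟨a₀, ha₀, ?_⟩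
    · simp only [Finset.mem_filter, Finset.mem_univ, true_and, hτ]
      exact fun h hσa => h (by rw [hσa, smul_zero])
    · simp [hτ, hca₀]

end MeasurementSDP

open MeasurementSDP

open Classical in
theorem sdp_optimal_solution_rank_squared_outcomes_general
    {n ι : Type*} [Fintype n] [Fintype ι] [Nonempty ι]
    (ρ : Matrix n n ℂ) (hρ : ρ.PosSemidef)
    (A : ι → Matrix n n ℂ) :
    ∃ σ : ι → Matrix n n ℂ,
      (∀ a, (σ a).PosSemidef) ∧ (∑ a, σ a = ρ) ∧
      (∀ τ : ι → Matrix n n ℂ, (∀ a, (τ a).PosSemidef) → (∑ a, τ a = ρ) →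
        (∑ a, ((σ a) * (A a)).trace).re ≤ (∑ a, ((τ a) * (A a)).trace).re) ∧
      (Finset.univ.filter fun a => σ a ≠ 0).card ≤ ρ.rank ^ 2 := by
  obtain ⟨σ₀, hσ₀⟩ := exists_isMinOn_cost hρ.nonneg A
  obtain ⟨σ, ⟨hσ, hσmin⟩, hleast⟩ :=
    (measure fun σ : ι → Matrix n n ℂ => (Finset.univ.filter fun a => σ a ≠ 0).card).wf.has_min
      {σ | σ ∈ feasibleSet ρ ∧ IsMinOn (cost A) (feasibleSet ρ) σ} ⟨σ₀, hσ₀⟩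
  refine ⟨σ, fun a => (hσ.1 a).posSemidef, hσ.2,
    fun τ hτ hτρ => hσmin ⟨fun a => (hτ a).nonneg, hτρ⟩, ?_⟩
  by_contra! hcard
  have hdep : ¬ LinearIndepOn ℝ σ (Finset.univ.filter fun a => σ a ≠ 0) := fun h =>
    hcard.not_ge (card_le_rank_sq_of_linearIndepOn hρ.isHermitian
      (fun a _ => ⟨hσ.1 a, le_of_mem_feasibleSet hσ a⟩) h)
  obtain ⟨τ, hτ, hτmin, hlt⟩ := exists_isMinOn_card_lt A hσ hσmin hdep
  exact hleast τ ⟨hτ, hτmin⟩ hlt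

open Classical in
/-- The measurement SDP admits an optimal solution supported on at most `r²` outcomes,
where `r` is the rank of the density matrix `ρ`. -/
theorem sdp_optimal_solution_rank_squared_outcomes
    {n ι : Type*} [Fintype n] [DecidableEq n] [Fintype ι] [Nonempty ι]
    (ρ : Matrix n n ℂ) (hρ : ρ.PosSemidef) (hρtr : ρ.trace = 1)
    (A : ι → Matrix n n ℂ) (hA : ∀ a, (A a).IsHermitian) :
    ∃ σ : ι → Matrix n n ℂ,
      (∀ a, (σ a).PosSemidef) ∧ (∑ a, σ a = ρ) ∧
      (∀ τ : ι → Matrix n n ℂ, (∀ a, (τ a).PosSemidef) → (∑ a, τ a = ρ) →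
        (∑ a, ((σ a) * (A a)).trace).re ≤ (∑ a, ((τ a) * (A a)).trace).re) ∧
      (Finset.univ.filter fun a => σ a ≠ 0).card ≤ ρ.rank ^ 2 :=
  sdp_optimal_solution_rank_squared_outcomes_general ρ hρ A
end
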